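/- For simple random walk on \mathbb{Z}^d, \sum_{x \in B_M} P_x[\tau_0 < \tau_M] \ge M, where \tau_0 is the hitting time of 0 and \tau_M the exit time from B_M = \{x : \|x\|_2 \le M\}. -/

import Mathlib

open MeasureTheory ProbabilityTheory Filter
open scoped ENNReal NNReal

noncomputable section

/-- The set of unit steps of the simple random walk on `ℤ^d`. -/
def stepSet (d : ℕ) : Finset (Fin d → ℤ) :=
  (Finset.univ : Finset (Fin d × Bool)).image
    (fun p => fun j => if j = p.1 then (if p.2 then 1 else -1) else 0)

/-- Simple random walk on `ℤ^d`, given by a measure on the space of step sequences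
under which the coordinates are i.i.d. uniform on the set of unit steps. -/
structure SRW (d : ℕ) where
  P : Measure (ℕ → Fin d → ℤ)
  hprob : IsProbabilityMeasure P
  hne : (stepSet d).Nonempty
  hindep : iIndepFun (fun n ω => ω n) P
  hdist : ∀ n, P.map (fun ω => ω n) = (PMF.uniformOfFinset (stepSet d) hne).toMeasure

namespace SRW

variable {d : ℕ}

/-- Position at time `t` of the walk started at `x`. -/
def pos (W : SRW d) (x : Fin d → ℤ) (t : ℕ) (ω : ℕ → Fin d → ℤ) : Fin d → ℤ :=
  x + ∑ i ∈ Finset.range t, ω i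

/-- The Euclidean ball of radius `M` in `ℤ^d`. -/
def ball (d M : ℕ) : Finset (Fin d → ℤ) :=
  (Finset.Icc (fun _ => -(M : ℤ)) (fun _ => (M : ℤ))).filter
    (fun x => ∑ i, (x i) ^ 2 ≤ (M : ℤ) ^ 2)

/-- The event that the walk started at `x` has not exited `ball d M` by time `t`,
i.e. the exit time is `> t`. -/
def stays (W : SRW d) (x : Fin d → ℤ) (M t : ℕ) : Set (ℕ → Fin d → ℤ) :=
  {ω | ∀ s ≤ t, W.pos x s ω ∈ ball d M}

/-- The Green function `G_M(a,b)`: expected number of visits to `b`, strictly before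
exiting `ball d M`, of the walk started at `a`. -/
def green (W : SRW d) (M : ℕ) (a b : Fin d → ℤ) : ℝ≥0∞ :=
  ∑' t, W.P ({ω | W.pos a t ω = b} ∩ W.stays a M t)

/-- Expected exit time from `ball d M` of the walk started at `x`, computed as
`E[τ] = ∑_{t ≥ 0} P[τ > t]`. -/
def exitTimeExp (W : SRW d) (x : Fin d → ℤ) (M : ℕ) : ℝ≥0∞ :=
  ∑' t, W.P (W.stays x M t)

/-- The event that the walk started at `x` hits `0` before exiting `ball d M`. -/
def hitBefore (W : SRW d) (x : Fin d → ℤ) (M : ℕ) : Set (ℕ → Fin d → ℤ) :=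
  {ω | ∃ t, W.pos x t ω = 0 ∧ ∀ s ≤ t, W.pos x s ω ∈ ball d M}

end SRW

/-- Simple random walk on `ℤ`. -/
structure SRW1 where
  P : Measure (ℕ → ℤ)
  hprob : IsProbabilityMeasure P
  hindep : iIndepFun (fun n ω => ω n) P
  hdist : ∀ n, P.map (fun ω => ω n) =
    (PMF.uniformOfFinset ({-1, 1} : Finset ℤ) (by simp)).toMeasure

namespace SRW1

def pos (W : SRW1) (x : ℤ) (t : ℕ) (ω : ℕ → ℤ) : ℤ :=
  x + ∑ i ∈ Finset.range t, ω i

def stays (W : SRW1) (x : ℤ) (M : ℕ) (t : ℕ) : Set (ℕ → ℤ) :=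
  {ω | ∀ s ≤ t, W.pos x s ω ∈ Finset.Icc (-(M : ℤ)) (M : ℤ)}

def green (W : SRW1) (M : ℕ) (a b : ℤ) : ℝ≥0∞ :=
  ∑' t, W.P ({ω | W.pos a t ω = b} ∩ W.stays a M t)

def exitTimeExp (W : SRW1) (x : ℤ) (M : ℕ) : ℝ≥0∞ :=
  ∑' t, W.P (W.stays x M t)

def hitBefore (W : SRW1) (x : ℤ) (M : ℕ) : Set (ℕ → ℤ) :=
  {ω | ∃ t, W.pos x t ω = 0 ∧ ∀ s ≤ t, W.pos x s ω ∈ Finset.Icc (-(M : ℤ)) (M : ℤ)}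

end SRW1


/-!
Let `h(x)` be the probability that the walk from `x` visits `0` before leaving the ball `B`:
it equals `1` at `0`, vanishes off `B` and is harmonic on `B \ {0}`. Pair it, through the
discrete Green identity for the neighbour-sum operator, with `u(x) = c‖x‖ - ‖x‖²`,
`c = √(M² + 1)`, cut off at `B`. Then `u(0) = 0`, and by the triangle inequality and the
parallelogram law the neighbour average of `u` falls short of `u` by at most `1`. The identity
yields `∑_{x ∈ B \ {0}} h(x) ≥` the average of `u` over the neighbours of `0`, which is
`c - 1 ≥ M - 1`.
-/

section NeighbourSums

variable {G : Type*} [AddCommGroup G] {S : Finset G}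

theorem Finset.sum_comp_neg_of_neg_mem {M : Type*} [AddCommMonoid M] (hS : ∀ e ∈ S, -e ∈ S)
    (f : G → M) : ∑ e ∈ S, f (-e) = ∑ e ∈ S, f e :=
  Finset.sum_nbij' (fun e => -e) (fun e => -e) hS hS (fun e _ => neg_neg e) (fun e _ => neg_neg e)
    fun _ _ => rfl

theorem sum_mul_sum_add_comm {R : Type*} [CommSemiring R] (hS : ∀ e ∈ S, -e ∈ S) {A : Finset G}
    {f g : G → R} (hf : Function.support f ⊆ A) (hg : Function.support g ⊆ A) :
    ∑ x ∈ A, f x * ∑ e ∈ S, g (x + e) = ∑ x ∈ A, g x * ∑ e ∈ S, f (x + e) := by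
  have shift (e : G) : ∑ x ∈ A, f x * g (x + e) = ∑ x ∈ A, g x * f (x + -e) :=
    calc ∑ x ∈ A, f x * g (x + e)
        = ∑ᶠ x, f x * g (x + e) :=
          (finsum_eq_sum_of_support_subset _ ((Function.support_mul_subset_left _ _).trans hf)).symm
      _ = ∑ᶠ x, g (Equiv.addRight e x) * f (Equiv.addRight e x + -e) := by
          simp only [Equiv.coe_addRight, add_neg_cancel_right, mul_comm]
      _ = ∑ᶠ y, g y * f (y + -e) :=
          finsum_comp_equiv (f := fun y => g y * f (y + -e)) (Equiv.addRight e)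
      _ = ∑ y ∈ A, g y * f (y + -e) :=
          finsum_eq_sum_of_support_subset _ ((Function.support_mul_subset_left _ _).trans hg)
  calc ∑ x ∈ A, f x * ∑ e ∈ S, g (x + e)
      = ∑ e ∈ S, ∑ x ∈ A, f x * g (x + e) := by simp only [Finset.mul_sum]; exact Finset.sum_comm
    _ = ∑ e ∈ S, ∑ x ∈ A, g x * f (x + -e) := Finset.sum_congr rfl fun e _ => shift e
    _ = ∑ e ∈ S, ∑ x ∈ A, g x * f (x + e) :=
        Finset.sum_comp_neg_of_neg_mem hS fun e => ∑ x ∈ A, g x * f (x + e)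
    _ = ∑ x ∈ A, g x * ∑ e ∈ S, f (x + e) := by simp only [Finset.mul_sum]; exact Finset.sum_comm

theorem card_mul_le_sum_add_of_midpoint (hS : ∀ e ∈ S, -e ∈ S) {φ : G → ℝ} {x : G} {a : ℝ}
    (h : ∀ e ∈ S, 2 * a ≤ φ (x + e) + φ (x - e)) : S.card * a ≤ ∑ e ∈ S, φ (x + e) := by
  have symm : ∑ e ∈ S, (φ (x + e) + φ (x - e)) = 2 * ∑ e ∈ S, φ (x + e) := by
    simp only [Finset.sum_add_distrib, sub_eq_add_neg,
      Finset.sum_comp_neg_of_neg_mem hS fun e => φ (x + e)]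
    ring
  have := Finset.card_nsmul_le_sum S _ _ h
  rw [nsmul_eq_mul, symm] at this
  linarith

theorem sum_add_le_card_mul_sum_erase (hS : ∀ e ∈ S, -e ∈ S) {B : Finset G} [DecidableEq G]
    {z : G} {h u : G → ℝ} (hh : Function.support h ⊆ B) (hu : Function.support u ⊆ B)
    (h_nonneg : ∀ x ∈ B.erase z, 0 ≤ h x) (hz : h z = 1) (uz : u z = 0)
    (h_harm : ∀ x ∈ B.erase z, ∑ e ∈ S, h (x + e) = S.card * h x)
    (u_super : ∀ x ∈ B.erase z, S.card * (u x - 1) ≤ ∑ e ∈ S, u (x + e)) :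
    ∑ e ∈ S, u (z + e) ≤ S.card * ∑ x ∈ B.erase z, h x := by
  have zB : z ∈ B := hh (by simp [hz])
  have green := sum_mul_sum_add_comm hS hh hu
  rw [← Finset.add_sum_erase B _ zB, ← Finset.add_sum_erase B _ zB, hz, uz, one_mul,
    zero_mul, zero_add] at green
  have lower : ∑ x ∈ B.erase z, h x * (S.card * (u x - 1))
      ≤ ∑ x ∈ B.erase z, h x * ∑ e ∈ S, u (x + e) :=
    Finset.sum_le_sum fun x hx => mul_le_mul_of_nonneg_left (u_super x hx) (h_nonneg x hx)
  have harm : ∑ x ∈ B.erase z, u x * ∑ e ∈ S, h (x + e)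
      = ∑ x ∈ B.erase z, h x * (S.card * (u x - 1)) + S.card * ∑ x ∈ B.erase z, h x := by
    rw [Finset.mul_sum, ← Finset.sum_add_distrib]
    exact Finset.sum_congr rfl fun x hx => by rw [h_harm x hx]; ring
  linarith

end NeighbourSums

theorem mul_norm_sub_sq_midpoint_le {E : Type*} [NormedAddCommGroup E] [InnerProductSpace ℝ E]
    {c : ℝ} (hc : 0 ≤ c) (x e : E) :
    2 * (c * ‖x‖ - ‖x‖ ^ 2 - ‖e‖ ^ 2)
      ≤ c * ‖x + e‖ - ‖x + e‖ ^ 2 + (c * ‖x - e‖ - ‖x - e‖ ^ 2) := by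
  have triangle : 2 * ‖x‖ ≤ ‖x + e‖ + ‖x - e‖ :=
    calc 2 * ‖x‖ = ‖(x + e) + (x - e)‖ := by
          rw [add_add_sub_cancel, ← two_smul ℝ x, norm_smul]; norm_num
      _ ≤ ‖x + e‖ + ‖x - e‖ := norm_add_le _ _
  have := parallelogram_law_with_norm ℝ x e
  nlinarith

section WordCylinder

variable {G : Type*} [Zero G]

def wordCylinder (w : List G) : Set (ℕ → G) :=
  {ω | ∀ i < w.length, ω i = w.getD i 0}

theorem mem_wordCylinder_cons {e : G} {w : List G} {ω : ℕ → G} :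
    ω ∈ wordCylinder (e :: w) ↔ ω 0 = e ∧ (fun n => ω (n + 1)) ∈ wordCylinder w := by
  simp only [wordCylinder, Set.mem_ofPred_eq, List.length_cons, Nat.forall_lt_succ_left,
    List.getD_cons_zero, List.getD_cons_succ]

theorem wordCylinder_eq_biInter (w : List G) :
    wordCylinder w = ⋂ i ∈ Finset.range w.length, (fun ω : ℕ → G => ω i) ⁻¹' {w.getD i 0} := by
  ext ω
  simp [wordCylinder]

theorem measurableSet_wordCylinder [MeasurableSpace G] [MeasurableSingletonClass G] (w : List G) :
    MeasurableSet (wordCylinder w) := by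
  rw [wordCylinder_eq_biInter]
  exact Finset.measurableSet_biInter _ fun i _ => measurable_pi_apply i (measurableSet_singleton _)

end WordCylinder

section FirstHit

variable {G : Type*} [AddCommGroup G] [DecidableEq G] (S B : Finset G)

def firstHitWords : ℕ → G → Finset (List G)
  | 0, x => if x = 0 then {[]} else ∅
  | s + 1, x =>
    if x ∈ B ∧ x ≠ 0 then S.biUnion fun e => (firstHitWords s (x + e)).image (e :: ·) else ∅

/-- The probability that the walk with uniform steps in `S` started at `x` visits `0` before
leaving `B`: a first-hit word of length `s` is followed with probability `|S|⁻ˢ`. -/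
def hitWeight (x : G) : ℝ≥0∞ :=
  ∑' s, (firstHitWords S B s x).card * ((S.card : ℝ≥0∞)⁻¹) ^ s

variable {S B}

theorem mem_firstHitWords_zero {x : G} {w : List G} :
    w ∈ firstHitWords S B 0 x ↔ x = 0 ∧ w = [] := by
  simp only [firstHitWords]
  split_ifs with hx <;> simp [hx]

theorem mem_firstHitWords_succ {s : ℕ} {x : G} {w : List G} :
    w ∈ firstHitWords S B (s + 1) x ↔
      x ∈ B ∧ x ≠ 0 ∧ ∃ e ∈ S, ∃ v ∈ firstHitWords S B s (x + e), e :: v = w := by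
  simp only [firstHitWords]
  split_ifs with hx
  · simp [hx]
  · simp only [Finset.notMem_empty, false_iff]
    tauto

theorem card_firstHitWords_succ {s : ℕ} {x : G} (hx : x ∈ B) (hx0 : x ≠ 0) :
    (firstHitWords S B (s + 1) x).card = ∑ e ∈ S, (firstHitWords S B s (x + e)).card := by
  rw [firstHitWords, if_pos ⟨hx, hx0⟩, Finset.card_biUnion]
  · exact Finset.sum_congr rfl fun e _ => Finset.card_image_of_injective _ List.cons_injective
  · intro e _ e' _ hne
    simp only [Function.onFun, Finset.disjoint_left, Finset.mem_image]
    rintro _ ⟨v, -, rfl⟩ ⟨v', -, hv'⟩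
    exact hne (List.cons_eq_cons.mp hv').1.symm

theorem length_of_mem_firstHitWords {s : ℕ} {x : G} {w : List G}
    (hw : w ∈ firstHitWords S B s x) : w.length = s := by
  induction s generalizing x w with
  | zero => simp [(mem_firstHitWords_zero.mp hw).2]
  | succ s ih =>
    obtain ⟨-, -, e, -, v, hv, rfl⟩ := mem_firstHitWords_succ.mp hw
    simp [ih hv]

theorem mem_of_mem_firstHitWords {s : ℕ} {x : G} {w : List G}
    (hw : w ∈ firstHitWords S B s x) {e : G} (he : e ∈ w) : e ∈ S := by
  induction s generalizing x w with
  | zero => simp [(mem_firstHitWords_zero.mp hw).2] at he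
  | succ s ih =>
    obtain ⟨-, -, e', he', v, hv, rfl⟩ := mem_firstHitWords_succ.mp hw
    rcases List.mem_cons.mp he with rfl | he
    exacts [he', ih hv he]

theorem hitWeight_zero : hitWeight S B 0 = 1 := by
  rw [hitWeight, tsum_eq_single 0]
  · simp [firstHitWords]
  · rintro (_ | s) hs
    · exact absurd rfl hs
    · simp [firstHitWords]

theorem hitWeight_eq_zero {x : G} (hx : x ∉ B) (hx0 : x ≠ 0) : hitWeight S B x = 0 := by
  refine ENNReal.tsum_eq_zero.mpr fun s => ?_
  cases s <;> simp [firstHitWords, hx, hx0]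

theorem hitWeight_eq_mul_sum {x : G} (hx : x ∈ B) (hx0 : x ≠ 0) :
    hitWeight S B x = (S.card : ℝ≥0∞)⁻¹ * ∑ e ∈ S, hitWeight S B (x + e) := by
  have start : (firstHitWords S B 0 x).card = 0 := by simp [firstHitWords, hx0]
  rw [hitWeight, tsum_eq_zero_add' ENNReal.summable, start, Nat.cast_zero, zero_mul, zero_add]
  simp only [card_firstHitWords_succ hx hx0, hitWeight, Nat.cast_sum, Finset.sum_mul, pow_succ',
    ← ENNReal.tsum_mul_left, Finset.mul_sum]
  rw [Summable.tsum_finsetSum fun _ _ => ENNReal.summable]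
  exact Finset.sum_congr rfl fun e _ => tsum_congr fun s => by ring

theorem eq_of_mem_wordCylinder_of_mem_firstHitWords {s s' : ℕ} {x : G} {w w' : List G} {ω : ℕ → G}
    (hw : w ∈ firstHitWords S B s x) (hw' : w' ∈ firstHitWords S B s' x)
    (hω : ω ∈ wordCylinder w) (hω' : ω ∈ wordCylinder w') : w = w' := by
  induction s generalizing s' x w w' ω with
  | zero =>
    obtain ⟨rfl, rfl⟩ := mem_firstHitWords_zero.mp hw
    cases s' with
    | zero => exact (mem_firstHitWords_zero.mp hw').2.symm
    | succ s' => exact absurd rfl (mem_firstHitWords_succ.mp hw').2.1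
  | succ s ih =>
    obtain ⟨-, hx0, e, -, v, hv, rfl⟩ := mem_firstHitWords_succ.mp hw
    cases s' with
    | zero => exact absurd (mem_firstHitWords_zero.mp hw').1 hx0
    | succ s' =>
      obtain ⟨-, -, e', -, v', hv', rfl⟩ := mem_firstHitWords_succ.mp hw'
      obtain ⟨rfl, tail⟩ := mem_wordCylinder_cons.mp hω
      obtain ⟨rfl, tail'⟩ := mem_wordCylinder_cons.mp hω'
      rw [ih hv hv' tail tail']

end FirstHit

namespace SRW

variable {d M : ℕ}

theorem pos_zero (W : SRW d) (x : Fin d → ℤ) (ω : ℕ → Fin d → ℤ) : W.pos x 0 ω = x := by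
  simp [pos]

theorem pos_succ (W : SRW d) (x : Fin d → ℤ) (t : ℕ) (ω : ℕ → Fin d → ℤ) :
    W.pos x (t + 1) ω = W.pos (x + ω 0) t (fun n => ω (n + 1)) := by
  simp only [pos, Finset.sum_range_succ']
  abel

theorem zero_mem_ball : (0 : Fin d → ℤ) ∈ ball d M := by
  simp [ball, Pi.le_def]

theorem mem_hitBefore_of_mem_wordCylinder (W : SRW d) {s : ℕ} {x : Fin d → ℤ}
    {w : List (Fin d → ℤ)} {ω : ℕ → Fin d → ℤ}
    (hw : w ∈ firstHitWords (stepSet d) (ball d M) s x) (hω : ω ∈ wordCylinder w) :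
    ω ∈ W.hitBefore x M := by
  induction s generalizing x w ω with
  | zero =>
    obtain ⟨rfl, -⟩ := mem_firstHitWords_zero.mp hw
    refine ⟨0, W.pos_zero _ _, fun r hr => ?_⟩
    rw [Nat.le_zero.mp hr, W.pos_zero]
    exact zero_mem_ball
  | succ s ih =>
    obtain ⟨hx, -, e, -, v, hv, rfl⟩ := mem_firstHitWords_succ.mp hw
    obtain ⟨rfl, tail⟩ := mem_wordCylinder_cons.mp hω
    obtain ⟨t, hit, stay⟩ := ih hv tail
    refine ⟨t + 1, by rwa [W.pos_succ], fun r hr => ?_⟩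
    cases r with
    | zero => rwa [W.pos_zero]
    | succ r => rw [W.pos_succ]; exact stay r (by omega)

theorem measure_wordCylinder (W : SRW d) {w : List (Fin d → ℤ)} (hw : ∀ e ∈ w, e ∈ stepSet d) :
    W.P (wordCylinder w) = ((stepSet d).card : ℝ≥0∞)⁻¹ ^ w.length := by
  have step (i : ℕ) (hi : i ∈ Finset.range w.length) :
      W.P ((fun ω => ω i) ⁻¹' {w.getD i 0}) = ((stepSet d).card : ℝ≥0∞)⁻¹ := by
    rw [Finset.mem_range] at hi
    rw [← Measure.map_apply (measurable_pi_apply i) (measurableSet_singleton _), W.hdist i,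
      PMF.toMeasure_apply_singleton _ _ (measurableSet_singleton _), PMF.uniformOfFinset_apply,
      if_pos (hw _ (List.getD_eq_getElem _ _ hi ▸ List.getElem_mem hi))]
  rw [wordCylinder_eq_biInter, iIndepFun_iff_measure_inter_preimage_eq_mul.mp W.hindep _
    fun i _ => measurableSet_singleton _, Finset.prod_congr rfl step, Finset.prod_const,
    Finset.card_range]

theorem hitWeight_le_measure_hitBefore (W : SRW d) (x : Fin d → ℤ) :
    hitWeight (stepSet d) (ball d M) x ≤ W.P (W.hitBefore x M) := by
  set F := firstHitWords (stepSet d) (ball d M)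
  have level (s : ℕ) : ((F s x).card : ℝ≥0∞) * ((stepSet d).card : ℝ≥0∞)⁻¹ ^ s
      = W.P (⋃ w ∈ F s x, wordCylinder w) := by
    rw [measure_biUnion_finset (fun w hw w' hw' hne => Set.disjoint_left.mpr fun ω hω hω' =>
        hne (eq_of_mem_wordCylinder_of_mem_firstHitWords hw hw' hω hω'))
        fun w _ => measurableSet_wordCylinder w,
      Finset.sum_congr rfl fun w hw => by
        rw [W.measure_wordCylinder fun e => mem_of_mem_firstHitWords hw,
          length_of_mem_firstHitWords hw],
      Finset.sum_const, nsmul_eq_mul]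
  have disjoint : Pairwise (Function.onFun Disjoint fun s => ⋃ w ∈ F s x, wordCylinder w) := by
    intro s s' hss'
    refine Set.disjoint_left.mpr fun ω hω hω' => hss' ?_
    simp only [Set.mem_iUnion] at hω hω'
    obtain ⟨w, hw, hωw⟩ := hω
    obtain ⟨w', hw', hωw'⟩ := hω'
    rw [← length_of_mem_firstHitWords hw, ← length_of_mem_firstHitWords hw',
      eq_of_mem_wordCylinder_of_mem_firstHitWords hw hw' hωw hωw']
  calc hitWeight (stepSet d) (ball d M) x = ∑' s, W.P (⋃ w ∈ F s x, wordCylinder w) :=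
        tsum_congr level
    _ = W.P (⋃ s, ⋃ w ∈ F s x, wordCylinder w) :=
        (measure_iUnion disjoint fun s =>
          Finset.measurableSet_biUnion _ fun w _ => measurableSet_wordCylinder w).symm
    _ ≤ W.P (W.hitBefore x M) := measure_mono <| Set.iUnion_subset fun s =>
        Set.iUnion₂_subset fun w hw ω hω => W.mem_hitBefore_of_mem_wordCylinder hw hω

theorem hitWeight_ne_top (W : SRW d) (x : Fin d → ℤ) : hitWeight (stepSet d) (ball d M) x ≠ ⊤ :=
  have := W.hprob
  ne_top_of_le_ne_top ENNReal.one_ne_top ((W.hitWeight_le_measure_hitBefore x).trans prob_le_one)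

end SRW

namespace SRW

variable {d M : ℕ}

def latticeToEuclidean (d : ℕ) : (Fin d → ℤ) →+ EuclideanSpace ℝ (Fin d) :=
  (WithLp.linearEquiv 2 ℝ (Fin d → ℝ)).symm.toAddMonoidHom.comp
    ((Int.castAddHom ℝ).compLeft (Fin d))

theorem norm_latticeToEuclidean_sq (x : Fin d → ℤ) :
    ‖latticeToEuclidean d x‖ ^ 2 = ((∑ i, x i ^ 2 : ℤ) : ℝ) := by
  rw [EuclideanSpace.norm_sq_eq]
  push_cast
  simp [latticeToEuclidean]

theorem mem_ball_iff {x : Fin d → ℤ} : x ∈ ball d M ↔ ∑ i, x i ^ 2 ≤ (M : ℤ) ^ 2 := by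
  refine ⟨fun hx => (Finset.mem_filter.mp hx).2, fun hx => Finset.mem_filter.mpr ⟨?_, hx⟩⟩
  have bound (i : Fin d) := abs_le_of_sq_le_sq'
    ((Finset.single_le_sum (fun j _ => sq_nonneg (x j)) (Finset.mem_univ i)).trans hx)
    (Int.natCast_nonneg M)
  exact Finset.mem_Icc.mpr ⟨fun i => (bound i).1, fun i => (bound i).2⟩

theorem sqrt_le_norm_of_notMem_ball {x : Fin d → ℤ} (hx : x ∉ ball d M) :
    √((M : ℝ) ^ 2 + 1) ≤ ‖latticeToEuclidean d x‖ := by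
  rw [mem_ball_iff, not_le, ← Int.add_one_le_iff] at hx
  rw [Real.sqrt_le_iff, norm_latticeToEuclidean_sq]
  exact ⟨norm_nonneg _, by exact_mod_cast hx⟩

theorem sum_sq_of_mem_stepSet {e : Fin d → ℤ} (he : e ∈ stepSet d) : ∑ i, e i ^ 2 = 1 := by
  obtain ⟨⟨i, b⟩, -, rfl⟩ := Finset.mem_image.mp he
  cases b <;> simp [ite_pow]

theorem neg_mem_stepSet {e : Fin d → ℤ} (he : e ∈ stepSet d) : -e ∈ stepSet d := by
  obtain ⟨⟨i, b⟩, -, rfl⟩ := Finset.mem_image.mp he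
  refine Finset.mem_image.mpr ⟨(i, !b), Finset.mem_univ _, funext fun j => ?_⟩
  cases b <;> by_cases j = i <;> simp [*]

theorem norm_latticeToEuclidean_of_mem_stepSet {e : Fin d → ℤ} (he : e ∈ stepSet d) :
    ‖latticeToEuclidean d e‖ = 1 := by
  rw [← sq_eq_sq₀ (norm_nonneg _) zero_le_one, norm_latticeToEuclidean_sq,
    sum_sq_of_mem_stepSet he]
  norm_num

theorem mem_ball_of_mem_stepSet (hM : 1 ≤ M) {e : Fin d → ℤ} (he : e ∈ stepSet d) :
    e ∈ ball d M := by
  rw [mem_ball_iff, sum_sq_of_mem_stepSet he]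
  exact_mod_cast Nat.one_le_pow _ _ hM

/-- The choice `c = √(M² + 1)` makes `c‖x‖ - ‖x‖²` nonpositive off the ball, so cutting it off
there only raises it. -/
def testFn (M : ℕ) (x : Fin d → ℤ) : ℝ :=
  if x ∈ ball d M then
    √((M : ℝ) ^ 2 + 1) * ‖latticeToEuclidean d x‖ - ‖latticeToEuclidean d x‖ ^ 2
  else 0

theorem le_testFn (x : Fin d → ℤ) :
    √((M : ℝ) ^ 2 + 1) * ‖latticeToEuclidean d x‖ - ‖latticeToEuclidean d x‖ ^ 2
      ≤ testFn M x := by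
  unfold testFn
  split_ifs with hx
  · exact le_rfl
  · nlinarith [sqrt_le_norm_of_notMem_ball hx, Real.sqrt_nonneg ((M : ℝ) ^ 2 + 1)]

theorem support_testFn : Function.support (testFn (d := d) M) ⊆ ball d M := fun x hx => by
  by_contra hxB
  exact hx (if_neg hxB)

theorem testFn_zero : testFn M (0 : Fin d → ℤ) = 0 := by
  simp [testFn]

theorem testFn_of_mem_stepSet (hM : 1 ≤ M) {e : Fin d → ℤ} (he : e ∈ stepSet d) :
    testFn M e = √((M : ℝ) ^ 2 + 1) - 1 := by
  rw [testFn, if_pos (mem_ball_of_mem_stepSet hM he), norm_latticeToEuclidean_of_mem_stepSet he]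
  ring

theorem card_mul_le_sum_testFn {x : Fin d → ℤ} (hx : x ∈ ball d M) :
    (stepSet d).card * (testFn M x - 1) ≤ ∑ e ∈ stepSet d, testFn M (x + e) := by
  set ψ : (Fin d → ℤ) → ℝ := fun y =>
    √((M : ℝ) ^ 2 + 1) * ‖latticeToEuclidean d y‖ - ‖latticeToEuclidean d y‖ ^ 2
  have midpoint (e : Fin d → ℤ) (he : e ∈ stepSet d) :
      2 * (testFn M x - 1) ≤ ψ (x + e) + ψ (x - e) := by
    have := mul_norm_sub_sq_midpoint_le (Real.sqrt_nonneg ((M : ℝ) ^ 2 + 1))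
      (latticeToEuclidean d x) (latticeToEuclidean d e)
    rw [norm_latticeToEuclidean_of_mem_stepSet he, one_pow, ← map_add, ← map_sub] at this
    rw [testFn, if_pos hx]
    exact this
  calc (stepSet d).card * (testFn M x - 1) ≤ ∑ e ∈ stepSet d, ψ (x + e) :=
        card_mul_le_sum_add_of_midpoint (fun _ => neg_mem_stepSet) midpoint
    _ ≤ ∑ e ∈ stepSet d, testFn M (x + e) := Finset.sum_le_sum fun e _ => le_testFn (x + e)

theorem natCast_le_sum_toReal_hitWeight (W : SRW d) (hM : 1 ≤ M) :
    (M : ℝ) ≤ ∑ x ∈ ball d M, (hitWeight (stepSet d) (ball d M) x).toReal := by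
  set h : (Fin d → ℤ) → ℝ := fun x => (hitWeight (stepSet d) (ball d M) x).toReal
  have card_pos : (0 : ℝ) < (stepSet d).card := by exact_mod_cast W.hne.card_pos
  have h_support : Function.support h ⊆ ball d M := fun x hx => by
    by_contra hxB
    have hx0 : x ≠ 0 := fun hx0 => hxB (hx0 ▸ zero_mem_ball)
    exact hx (by simp [h, hitWeight_eq_zero hxB hx0])
  have h_harm (x : Fin d → ℤ) (hx : x ∈ (ball d M).erase 0) :
      ∑ e ∈ stepSet d, h (x + e) = (stepSet d).card * h x := by
    obtain ⟨hx0, hxB⟩ := Finset.mem_erase.mp hx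
    simp only [h, hitWeight_eq_mul_sum hxB hx0, ENNReal.toReal_mul, ENNReal.toReal_inv,
      ENNReal.toReal_natCast, ENNReal.toReal_sum fun e _ => W.hitWeight_ne_top _, ← mul_assoc,
      mul_inv_cancel₀ card_pos.ne', one_mul]
  have comparison := sum_add_le_card_mul_sum_erase (fun _ => neg_mem_stepSet) h_support
    support_testFn (fun x _ => ENNReal.toReal_nonneg) (by simp [h, hitWeight_zero]) testFn_zero
    h_harm fun x hx => card_mul_le_sum_testFn (Finset.mem_of_mem_erase hx)
  rw [Finset.sum_congr rfl fun e he => by rw [zero_add, testFn_of_mem_stepSet hM he],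
    Finset.sum_const, nsmul_eq_mul] at comparison
  have M_le : (M : ℝ) ≤ √((M : ℝ) ^ 2 + 1) :=
    (Real.le_sqrt (by positivity) (by positivity)).mpr (by linarith)
  have erase_ge := le_of_mul_le_mul_left comparison card_pos
  rw [← Finset.add_sum_erase _ _ zero_mem_ball]
  simp only [h, hitWeight_zero, ENNReal.toReal_one] at erase_ge ⊢
  linarith

end SRW

/-- For simple random walk on `ℤ^d`,
`∑_{x ∈ B_M} P_x[τ_0 < τ_M] ≥ M`. -/
theorem sum_hit_prob_ge {d : ℕ} (W : SRW d) (M : ℕ) :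
    (M : ℝ≥0∞) ≤ ∑ x ∈ SRW.ball d M, W.P (W.hitBefore x M) := by
  rcases Nat.eq_zero_or_pos M with rfl | hM
  · simp
  calc (M : ℝ≥0∞) = ENNReal.ofReal M := (ENNReal.ofReal_natCast M).symm
    _ ≤ ENNReal.ofReal (∑ x ∈ SRW.ball d M, (hitWeight (stepSet d) (SRW.ball d M) x).toReal) :=
        ENNReal.ofReal_le_ofReal (W.natCast_le_sum_toReal_hitWeight hM)
    _ = ∑ x ∈ SRW.ball d M, hitWeight (stepSet d) (SRW.ball d M) x := by
        rw [ENNReal.ofReal_sum_of_nonneg fun _ _ => ENNReal.toReal_nonneg]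
        exact Finset.sum_congr rfl fun x _ => ENNReal.ofReal_toReal (W.hitWeight_ne_top x)
    _ ≤ ∑ x ∈ SRW.ball d M, W.P (W.hitBefore x M) :=
        Finset.sum_le_sum fun x _ => W.hitWeight_le_measure_hitBefore x
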